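/- Let Ω̄ be a binary matrix formed as the horizontal concatenation of k disjoint column-blocks Ω̄_1, …, Ω̄_k, each of which satisfies: every subset of columns Ω'' of Ω̄_i obeys g(Ω'') − R ≥ c(Ω''). Then every subset of columns Ω' of Ω̄ satisfies c(Ω') ≤ k·(g(Ω') − R)^+, where x^+ = max(x,0). -/
import Mathlib


open Finset in
/-- If each of `k` column-blocks of a binary matrix satisfies
`g(S) ≥ c(S) + R` for all its nonempty column subsets, then any column subset
`S` of the whole matrix satisfies `c(S) ≤ k * (g(S) - R)⁺` (natural
subtraction plays the role of `(·)⁺`). -/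
theorem stmt13 {n k R : ℕ} {cols : Type*} [Fintype cols] [DecidableEq cols]
    (block : cols → Fin k) (M : Fin n → cols → Bool)
    (h : ∀ i : Fin k, ∀ S : Finset cols, (∀ j ∈ S, block j = i) → S.Nonempty →
      S.card + R ≤ (univ.filter fun x : Fin n => ∃ j ∈ S, M x j = true).card) :
    ∀ S : Finset cols,
      S.card ≤ k * ((univ.filter fun x : Fin n => ∃ j ∈ S, M x j = true).card - R) := by
  intro S
  have hcard : S.card = ∑ i : Fin k, (S.filter fun j => block j = i).card :=
    Finset.card_eq_sum_card_fiberwise (fun x _ => Finset.mem_univ (block x))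
  rw [hcard]
  have hbound : ∀ i : Fin k, (S.filter fun j => block j = i).card ≤
      (univ.filter fun x : Fin n => ∃ j ∈ S, M x j = true).card - R := by
    intro i
    rcases (S.filter fun j => block j = i).eq_empty_or_nonempty with he | hne
    · simp [he]
    · have h1 := h i _ (fun j hj => (Finset.mem_filter.mp hj).2) hne
      have h2 : (univ.filter fun x : Fin n => ∃ j ∈ S.filter (fun j => block j = i), M x j = true).card
          ≤ (univ.filter fun x : Fin n => ∃ j ∈ S, M x j = true).card := by
        apply Finset.card_le_card
        intro x hx
        simp only [Finset.mem_filter, Finset.mem_univ, true_and] at hx ⊢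
        obtain ⟨j, hj, hM⟩ := hx
        exact ⟨j, hj.1, hM⟩
      omega
  calc ∑ i : Fin k, (S.filter fun j => block j = i).card
      ≤ ∑ _i : Fin k, ((univ.filter fun x : Fin n => ∃ j ∈ S, M x j = true).card - R) :=
        Finset.sum_le_sum fun i _ => hbound i
    _ = k * ((univ.filter fun x : Fin n => ∃ j ∈ S, M x j = true).card - R) := by
        simp [Finset.sum_const, mul_comm]
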